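/- Suppose G* is a maximal r-regular induced subgraph of G with components of sizes m_1,…,m_m and constant per-component weights w'_1,…,w'_m, and every vertex i ∉ V* has at least r+1 neighbors j ∈ V* with w_i ≥ w_j. With multiplicative weighting Ã = WAW, the strategy x* with x*_i = w̃²/(w'_k)² for i ∈ V*_k (where 1/w̃² = Σ_k m_k/(w'_k)²) and 0 elsewhere is a Nash equilibrium with λ* = (r+1)w̃². -/

import Mathlib

open Matrix Finset

/-!
On V* the equilibrium candidate satisfies w_j x*_j = w̃² / w_j, so the payoff of a pure strategy
i is (Ã x*)_i = w̃² Σ_{j ∈ V*} A_ij w_i / w_j. Inside a component all weights agree and the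
r-regular closed neighbourhood gives exactly (r+1) w̃²; outside V* each of the at least r+1
neighbours j with w_j ≤ w_i contributes at least w̃². Hence x* equalizes the payoff on its
support and no pure strategy does better, which is the Nash condition.
-/

section StdSimplex

variable {ι : Type*} [Fintype ι] {x v : ι → ℝ} {c : ℝ}

theorem le_dotProduct_of_mem_stdSimplex (hx : x ∈ stdSimplex ℝ ι) (hv : ∀ i, c ≤ v i) :
    c ≤ x ⬝ᵥ v :=
  calc c = ∑ i, x i * c := by rw [← sum_mul, hx.2, one_mul]
    _ ≤ x ⬝ᵥ v := sum_le_sum fun i _ => mul_le_mul_of_nonneg_left (hv i) (hx.1 i)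

theorem dotProduct_eq_of_mem_stdSimplex (hx : x ∈ stdSimplex ℝ ι)
    (hv : ∀ i, x i ≠ 0 → v i = c) : x ⬝ᵥ v = c :=
  calc x ⬝ᵥ v = ∑ i, x i * c := sum_congr rfl fun i _ => by
        by_cases h : x i = 0
        · simp [h]
        · rw [hv i h]
    _ = c := by rw [← sum_mul, hx.2, one_mul]

theorem mem_stdSimplex_of_eq_inv_sq {s : Finset ι} {w : ι → ℝ} (hs : s.Nonempty)
    (hw : ∀ j ∈ s, w j ≠ 0) (hx : ∀ j ∈ s, x j = (∑ k ∈ s, 1 / w k ^ 2)⁻¹ / w j ^ 2)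
    (hx0 : ∀ j ∉ s, x j = 0) : x ∈ stdSimplex ℝ ι := by
  have hpos : 0 < ∑ k ∈ s, 1 / w k ^ 2 :=
    sum_pos (fun k hk => by have := hw k hk; positivity) hs
  refine ⟨fun j => ?_, ?_⟩
  · by_cases hj : j ∈ s
    · rw [hx j hj]; positivity
    · rw [hx0 j hj]
  · calc ∑ j, x j = ∑ j ∈ s, x j := (sum_subset (subset_univ s) fun j _ hj => hx0 j hj).symm
      _ = (∑ k ∈ s, 1 / w k ^ 2)⁻¹ * ∑ j ∈ s, 1 / w j ^ 2 := by
        rw [mul_sum]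
        exact sum_congr rfl fun j hj => by rw [hx j hj, mul_one_div]
      _ = 1 := inv_mul_cancel₀ hpos.ne'

end StdSimplex

theorem sum_biUnion_one_div_sq {ι κ : Type*} [Fintype κ] [DecidableEq ι] {C : κ → Finset ι}
    (hC : ∀ k l, k ≠ l → Disjoint (C k) (C l)) {w : ι → ℝ} {w' : κ → ℝ}
    (hw : ∀ k, ∀ i ∈ C k, w i = w' k) :
    ∑ j ∈ univ.biUnion C, 1 / w j ^ 2 = ∑ k, (#(C k) : ℝ) / w' k ^ 2 := by
  rw [sum_biUnion fun k _ l _ hkl => hC k l hkl]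
  refine sum_congr rfl fun k _ => ?_
  rw [sum_congr rfl fun j hj => by rw [hw k j hj], sum_const, nsmul_eq_mul, mul_one_div]

section ZeroOne

variable {ι : Type*}

theorem sum_eq_card_filter_of_eq_zero_or_one {f : ι → ℝ} (hf : ∀ j, f j = 0 ∨ f j = 1)
    (s : Finset ι) : ∑ j ∈ s, f j = #(s.filter (f · = 1)) := by
  rw [natCast_card_filter]
  refine sum_congr rfl fun j _ => ?_
  rcases hf j with h | h <;> simp [h]

theorem card_filter_eq_card_filter_ne_add_one [DecidableEq ι] {p : ι → Prop} [DecidablePred p]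
    {s : Finset ι} {i : ι} (hi : i ∈ s) (hp : p i) :
    #(s.filter p) = #(s.filter fun j => j ≠ i ∧ p j) + 1 := by
  rw [← card_erase_add_one (mem_filter.2 ⟨hi, hp⟩)]
  congr 2
  ext j
  simp only [mem_erase, mem_filter]
  tauto

end ZeroOne

section WeightedMatrix

variable {ι : Type*} [Fintype ι] [DecidableEq ι] {A : Matrix ι ι ℝ} {w x : ι → ℝ}
  {s : Finset ι} {c : ℝ}

theorem diagonal_mul_mul_diagonal_mulVec_apply_of_eq_div_sq (hw : ∀ j ∈ s, w j ≠ 0)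
    (hx : ∀ j ∈ s, x j = c / w j ^ 2) (hx0 : ∀ j ∉ s, x j = 0) (i : ι) :
    ((diagonal w * A * diagonal w) *ᵥ x) i = c * ∑ j ∈ s, A i j * (w i / w j) := by
  rw [← mulVec_mulVec, ← mulVec_mulVec, mulVec_diagonal, mulVec, dotProduct,
    ← sum_subset (subset_univ s) fun j _ hj => by
      rw [mulVec_diagonal, hx0 j hj, mul_zero, mul_zero], mul_sum, mul_sum]
  refine sum_congr rfl fun j hj => ?_
  rw [mulVec_diagonal, hx j hj]
  have := hw j hj
  field_simp

end WeightedMatrix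

section RowSum

variable {ι : Type*} {A : Matrix ι ι ℝ} {w : ι → ℝ} {s : Finset ι}

theorem sum_mul_div_eq_card_filter_add_one [DecidableEq ι] {i : ι}
    (h01 : ∀ j, A i j = 0 ∨ A i j = 1) {C : Finset ι} (hi : i ∈ C) (hii : A i i = 1) (hCs : C ⊆ s)
    (hcross : ∀ j ∈ s, j ∉ C → A i j = 0)
    (hwC : ∀ j ∈ C, w j = w i) (hwi : w i ≠ 0) :
    ∑ j ∈ s, A i j * (w i / w j) = #(C.filter fun j => j ≠ i ∧ A i j = 1) + 1 := by
  rw [← sum_subset hCs fun j hj hjC => by rw [hcross j hj hjC, zero_mul]]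
  calc ∑ j ∈ C, A i j * (w i / w j) = ∑ j ∈ C, A i j :=
        sum_congr rfl fun j hj => by rw [hwC j hj, div_self hwi, mul_one]
    _ = _ := by
        rw [sum_eq_card_filter_of_eq_zero_or_one h01 C,
          card_filter_eq_card_filter_ne_add_one hi hii]
        norm_cast

theorem card_filter_le_sum_mul_div {i : ι} (hA : ∀ j, 0 ≤ A i j) (hw : ∀ j, 0 < w j) :
    (#(s.filter fun j => A i j = 1 ∧ w j ≤ w i) : ℝ) ≤ ∑ j ∈ s, A i j * (w i / w j) := by
  have hterm : ∀ j, 0 ≤ A i j * (w i / w j) := fun j =>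
    mul_nonneg (hA j) (div_pos (hw i) (hw j)).le
  calc (#(s.filter fun j => A i j = 1 ∧ w j ≤ w i) : ℝ)
      ≤ ∑ j ∈ s.filter fun j => A i j = 1 ∧ w j ≤ w i, A i j * (w i / w j) := by
        rw [← nsmul_one]
        refine card_nsmul_le_sum _ _ _ fun j hj => ?_
        obtain ⟨-, hA, hwj⟩ := mem_filter.1 hj
        rw [hA, one_mul]
        exact (one_le_div (hw j)).2 hwj
    _ ≤ ∑ j ∈ s, A i j * (w i / w j) :=
        sum_le_sum_of_subset_of_nonneg (filter_subset _ _) fun j _ _ => hterm j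

end RowSum

theorem stmt_16_general (n : ℕ) (A : Matrix (Fin n) (Fin n) ℝ)
    (h01 : ∀ i j, A i j = 0 ∨ A i j = 1)
    (hdiag : ∀ i, A i i = 1)
    (w : Fin n → ℝ) (hw : ∀ i, 1 ≤ w i)
    (At : Matrix (Fin n) (Fin n) ℝ)
    (hAt : At = Matrix.diagonal w * A * Matrix.diagonal w)
    (r : ℕ) (m : ℕ) (comps : Fin m → Finset (Fin n))
    (hdisj : ∀ k l, k ≠ l → Disjoint (comps k) (comps l))
    (Vs : Finset (Fin n)) (hVs : Vs = Finset.univ.biUnion comps)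
    (hne : Vs.Nonempty)
    (hreg : ∀ k, ∀ i ∈ comps k,
        ((comps k).filter (fun j => j ≠ i ∧ A i j = 1)).card = r)
    (hcross : ∀ k l, k ≠ l → ∀ i ∈ comps k, ∀ j ∈ comps l, A i j = 0)
    (w' : Fin m → ℝ)
    (hcompw : ∀ k, ∀ i ∈ comps k, w i = w' k)
    (hout : ∀ i, i ∉ Vs →
        r + 1 ≤ (Vs.filter (fun j => A i j = 1 ∧ w j ≤ w i)).card)
    (wbar : ℝ) (hwbar : wbar = (∑ k, ((comps k).card : ℝ) / (w' k) ^ 2)⁻¹)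
    (xstar : Fin n → ℝ)
    (hxstar : ∀ k, ∀ i ∈ comps k, xstar i = wbar / (w' k) ^ 2)
    (hxstar0 : ∀ i, i ∉ Vs → xstar i = 0) :
    xstar ∈ stdSimplex ℝ (Fin n) ∧
    (∀ x ∈ stdSimplex ℝ (Fin n),
        xstar ⬝ᵥ At.mulVec xstar ≤ x ⬝ᵥ At.mulVec xstar) ∧
    xstar ⬝ᵥ At.mulVec xstar = (r + 1 : ℝ) * wbar := by
  have hwpos : ∀ j, 0 < w j := fun j => zero_lt_one.trans_le (hw j)
  have hw0 : ∀ j ∈ Vs, w j ≠ 0 := fun j _ => (hwpos j).ne'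
  have hwbar' : wbar = (∑ j ∈ Vs, 1 / w j ^ 2)⁻¹ := by
    rw [hwbar, hVs, sum_biUnion_one_div_sq hdisj hcompw]
  have hxVs : ∀ j ∈ Vs, xstar j = wbar / w j ^ 2 := fun j hj => by
    obtain ⟨k, -, hk⟩ := mem_biUnion.1 (hVs ▸ hj)
    rw [hxstar k j hk, hcompw k j hk]
  have hx : xstar ∈ stdSimplex ℝ (Fin n) :=
    mem_stdSimplex_of_eq_inv_sq hne hw0 (hwbar' ▸ hxVs) hxstar0
  have hAtx := diagonal_mul_mul_diagonal_mulVec_apply_of_eq_div_sq (A := A) hw0 hxVs hxstar0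
  have hin : ∀ i ∈ Vs, (At *ᵥ xstar) i = (r + 1) * wbar := fun i hi => by
    obtain ⟨k, -, hk⟩ := mem_biUnion.1 (hVs ▸ hi)
    have hcross' : ∀ j ∈ Vs, j ∉ comps k → A i j = 0 := fun j hj hjk => by
      obtain ⟨l, -, hl⟩ := mem_biUnion.1 (hVs ▸ hj)
      exact hcross k l (fun hkl => hjk (hkl ▸ hl)) i hk j hl
    rw [hAt, hAtx, sum_mul_div_eq_card_filter_add_one (h01 i) hk (hdiag i)
      (hVs ▸ subset_biUnion_of_mem comps (mem_univ k)) hcross'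
      (fun j hj => by rw [hcompw k j hj, hcompw k i hk]) (hw0 i hi), hreg k i hk, mul_comm]
  have hlow : ∀ i, (r + 1) * wbar ≤ (At *ᵥ xstar) i := fun i => by
    by_cases hi : i ∈ Vs
    · exact (hin i hi).ge
    · rw [hAt, hAtx, mul_comm]
      have : 0 ≤ wbar := by rw [hwbar']; positivity
      gcongr
      have hA : ∀ j, 0 ≤ A i j := fun j => (h01 i j).elim (·.ge) fun h => h ▸ zero_le_one
      exact le_trans (by exact_mod_cast hout i hi) (card_filter_le_sum_mul_div hA hwpos)
  have hval : xstar ⬝ᵥ At *ᵥ xstar = (r + 1) * wbar :=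
    dotProduct_eq_of_mem_stdSimplex hx fun i hi => hin i (not_imp_comm.1 (hxstar0 i) hi)
  exact ⟨hx, fun y hy => hval ▸ le_dotProduct_of_mem_stdSimplex hy hlow, hval⟩

/-- Theorem 4.5: multiplicative weighting on a maximal r-regular subnetwork
whose components carry constant weights. The strategy x*_i = w̃²/(w'_k)² on
component k (with 1/w̃² = Σ_k m_k/(w'_k)²) is a Nash equilibrium with value
λ* = (r+1)w̃². -/
theorem stmt_16 (n : ℕ) (A : Matrix (Fin n) (Fin n) ℝ)
    (hsym : A.IsSymm)
    (h01 : ∀ i j, A i j = 0 ∨ A i j = 1)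
    (hdiag : ∀ i, A i i = 1)
    (w : Fin n → ℝ) (hw : ∀ i, 1 ≤ w i)
    (At : Matrix (Fin n) (Fin n) ℝ)
    (hAt : At = Matrix.diagonal w * A * Matrix.diagonal w)
    (r : ℕ) (m : ℕ) (comps : Fin m → Finset (Fin n))
    (hdisj : ∀ k l, k ≠ l → Disjoint (comps k) (comps l))
    (Vs : Finset (Fin n)) (hVs : Vs = Finset.univ.biUnion comps)
    (hne : Vs.Nonempty)
    (hcompne : ∀ k, (comps k).Nonempty)
    (hreg : ∀ k, ∀ i ∈ comps k,
        ((comps k).filter (fun j => j ≠ i ∧ A i j = 1)).card = r)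
    (hcross : ∀ k l, k ≠ l → ∀ i ∈ comps k, ∀ j ∈ comps l, A i j = 0)
    (w' : Fin m → ℝ) (hw' : ∀ k, 1 ≤ w' k)
    (hcompw : ∀ k, ∀ i ∈ comps k, w i = w' k)
    (hout : ∀ i, i ∉ Vs →
        r + 1 ≤ (Vs.filter (fun j => A i j = 1 ∧ w j ≤ w i)).card)
    (wbar : ℝ) (hwbar : wbar = (∑ k, ((comps k).card : ℝ) / (w' k) ^ 2)⁻¹)
    (xstar : Fin n → ℝ)
    (hxstar : ∀ k, ∀ i ∈ comps k, xstar i = wbar / (w' k) ^ 2)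
    (hxstar0 : ∀ i, i ∉ Vs → xstar i = 0) :
    xstar ∈ stdSimplex ℝ (Fin n) ∧
    (∀ x ∈ stdSimplex ℝ (Fin n),
        xstar ⬝ᵥ At.mulVec xstar ≤ x ⬝ᵥ At.mulVec xstar) ∧
    xstar ⬝ᵥ At.mulVec xstar = (r + 1 : ℝ) * wbar :=
  stmt_16_general n A h01 hdiag w hw At hAt r m comps hdisj Vs hVs hne hreg hcross w' hcompw hout
    wbar hwbar xstar hxstar hxstar0
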